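/- Let p be an odd prime and a an integer with a ≢ 0 (mod p). Let ν(a) be the number of quadruples (d₁, d₂, d₃, d₄) of residues modulo p, all coprime to p, satisfying a(d₁ + d₂) ≡ d₃ + d₄ (mod p) and a(d₁^{−1} + d₂^{−1}) ≡ d₃^{−1} + d₄^{−1} (mod p), where d^{−1} denotes the multiplicative inverse modulo p. Then ν(a) = 2(p − 1)(p − 3) + p(p − 1) if a² ≡ 1 (mod p), and ν(a) = 2(p − 1)(p − 3) otherwise. -/

import Mathlib

/-
If `x + y = 0`, the first congruence forces `z + w = 0` and the second one then holds
automatically, giving `(p - 1)²` quadruples. If `s = x + y ≠ 0`, then `z + w = a s ≠ 0`, and since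
`x⁻¹ + y⁻¹ = (x + y) / (x y)` the second congruence becomes `x y = z w`. Writing `y = s - x`,
`w = a s - z`, this is the conic `x (s - x) = z (a s - z)`, which completing the squares turns into
the hyperbola `u v = (a² - 1) s²`: it has `2p - 1` points if `a² = 1` and `p - 1` otherwise. Four
of them have a vanishing coordinate, and `s` ranges over `p - 1` values.
-/

open Finset

section

variable {F : Type*} [Field F]

lemma add_inv_conditions_iff {A x y z w : F} (hA : A ≠ 0) (hx : x ≠ 0) (hy : y ≠ 0)
    (hz : z ≠ 0) (hw : w ≠ 0) :
    (A * (x + y) = z + w ∧ A * (x⁻¹ + y⁻¹) = z⁻¹ + w⁻¹) ↔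
      (x + y = 0 ∧ z + w = 0) ∨ (x + y ≠ 0 ∧ z + w = A * (x + y) ∧ x * y = z * w) := by
  rw [inv_add_inv hx hy, inv_add_inv hz hw, mul_div_assoc', eq_comm (a := A * (x + y))]
  constructor
  · rintro ⟨hsum, hrecip⟩
    by_cases hs : x + y = 0
    · exact .inl ⟨hs, by rw [hsum, hs, mul_zero]⟩
    · rw [hsum, div_eq_div_iff (mul_ne_zero hx hy) (mul_ne_zero hz hw)] at hrecip
      exact .inr ⟨hs, hsum, (mul_left_cancel₀ (mul_ne_zero hA hs) hrecip).symm⟩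
  · rintro (⟨hs, hs'⟩ | ⟨-, hsum, hprod⟩)
    · simp [hs, hs']
    · rw [hsum, hprod]
      exact ⟨rfl, rfl⟩

variable [Fintype F] [DecidableEq F]

lemma card_filter_mul_eq_zero :
    #{z : F × F | z.1 * z.2 = 0} = 2 * Fintype.card F - 1 := by
  have hunion : ({z : F × F | z.1 * z.2 = 0} : Finset (F × F)) =
      ({0} : Finset F) ×ˢ univ ∪ univ ×ˢ ({0} : Finset F) := by
    ext ⟨x, y⟩; simp [mul_eq_zero, eq_comm]
  have hinter : ({0} : Finset F) ×ˢ univ ∩ univ ×ˢ ({0} : Finset F) = {(0, 0)} := by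
    ext ⟨x, y⟩; simp [and_comm, eq_comm]
  have h := card_union_add_card_inter (({0} : Finset F) ×ˢ univ) (univ ×ˢ ({0} : Finset F))
  rw [hinter, ← hunion] at h
  simp only [card_product, card_singleton, card_univ] at h
  omega

lemma card_filter_mul_eq_of_ne_zero {c : F} (hc : c ≠ 0) :
    #{z : F × F | z.1 * z.2 = c} = Fintype.card F - 1 := by
  calc #{z : F × F | z.1 * z.2 = c} = #{x : F | x ≠ 0} := by
        refine card_nbij' Prod.fst (fun x => (x, c / x)) ?_ ?_ ?_ ?_
        · rintro ⟨x, y⟩ hz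
          simp only [coe_filter, mem_univ, true_and, Set.mem_ofPred_eq] at hz ⊢
          exact left_ne_zero_of_mul (hz ▸ hc)
        · intro x hx
          simp_all [mul_div_cancel₀]
        · rintro ⟨x, y⟩ hz
          simp only [coe_filter, mem_univ, true_and, Set.mem_ofPred_eq] at hz
          simp [← hz, left_ne_zero_of_mul (hz ▸ hc)]
        · intro x _
          rfl
    _ = Fintype.card F - 1 := by rw [filter_ne', card_erase_of_mem (mem_univ 0), card_univ]

lemma card_filter_mul_eq (c : F) :
    #{z : F × F | z.1 * z.2 = c} =
      if c = 0 then 2 * Fintype.card F - 1 else Fintype.card F - 1 := by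
  split_ifs with hc
  · exact hc ▸ card_filter_mul_eq_zero
  · exact card_filter_mul_eq_of_ne_zero hc

lemma card_filter_conic (h2 : (2 : F) ≠ 0) {s : F} (hs : s ≠ 0) (A : F) :
    #{z : F × F | z.1 * (s - z.1) = z.2 * (A * s - z.2)} =
      if A ^ 2 = 1 then 2 * Fintype.card F - 1 else Fintype.card F - 1 := by
  -- `(2z - As)² - (2x - s)² = 4 (x (s - x) - z (As - z)) + (A² - 1) s²`, and a difference of
  -- squares is a product.
  have hconic : #{z : F × F | z.1 * (s - z.1) = z.2 * (A * s - z.2)} =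
      #{w : F × F | w.1 * w.2 = (A ^ 2 - 1) * s ^ 2} := by
    refine card_nbij'
      (fun z => (2 * z.2 - A * s - (2 * z.1 - s), 2 * z.2 - A * s + (2 * z.1 - s)))
      (fun w => (((w.2 - w.1) / 2 + s) / 2, ((w.1 + w.2) / 2 + A * s) / 2)) ?_ ?_ ?_ ?_
    · intro z hz
      simp only [coe_filter, mem_univ, true_and, Set.mem_ofPred_eq] at hz ⊢
      linear_combination 4 * hz
    · intro w hw
      simp only [coe_filter, mem_univ, true_and, Set.mem_ofPred_eq] at hw ⊢
      field_simp
      linear_combination 4 * hw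
    · intro z _
      ext <;> · simp only; field_simp; ring
    · intro w _
      ext <;> · simp only; field_simp; ring
  simp [hconic, card_filter_mul_eq, hs, sub_eq_zero]

lemma card_filter_mul_sub_eq_zero {t : F} (ht : t ≠ 0) : #{x : F | x * (t - x) = 0} = 2 := by
  have : ({x : F | x * (t - x) = 0} : Finset F) = {0, t} := by
    ext x; simp [sub_eq_zero, eq_comm]
  rw [this, card_pair ht.symm]

lemma card_filter_conic_add_four (h2 : (2 : F) ≠ 0) {s A : F} (hs : s ≠ 0) (hA : A ≠ 0) :
    #{z : F × F | z.1 * (s - z.1) = z.2 * (A * s - z.2) ∧ z.1 * (s - z.1) ≠ 0} + 4 =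
      if A ^ 2 = 1 then 2 * Fintype.card F - 1 else Fintype.card F - 1 := by
  have hdegenerate : ({z : F × F | z.1 * (s - z.1) = z.2 * (A * s - z.2) ∧ z.1 * (s - z.1) = 0} :
        Finset (F × F)) =
        ({x : F | x * (s - x) = 0} : Finset F) ×ˢ ({y : F | y * (A * s - y) = 0} : Finset F) := by
    ext ⟨x, y⟩
    simp only [mem_filter, mem_univ, true_and, mem_product]
    constructor
    · rintro ⟨h, h0⟩; exact ⟨h0, h ▸ h0⟩
    · rintro ⟨h0, h0'⟩; exact ⟨h0.trans h0'.symm, h0⟩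
  rw [← card_filter_conic h2 hs A, ← card_filter_add_card_filter_not
    (s := {z : F × F | z.1 * (s - z.1) = z.2 * (A * s - z.2)}) (fun z => z.1 * (s - z.1) ≠ 0)]
  simp only [filter_filter, not_not]
  rw [hdegenerate, card_product, card_filter_mul_sub_eq_zero hs,
    card_filter_mul_sub_eq_zero (mul_ne_zero hA hs)]

lemma card_filter_units_add_eq_zero :
    #{d : Fˣ × Fˣ × Fˣ × Fˣ | (d.1 : F) + d.2.1 = 0 ∧ (d.2.2.1 : F) + d.2.2.2 = 0} =
      (Fintype.card F - 1) ^ 2 := by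
  have hneg {u v : Fˣ} : (u : F) + v = 0 ↔ v = -u := by
    rw [Units.ext_iff, Units.val_neg, eq_neg_iff_add_eq_zero, add_comm]
  calc _ = #(univ : Finset (Fˣ × Fˣ)) := by
        refine card_nbij' (fun d => (d.1, d.2.2.1)) (fun e => (e.1, -e.1, e.2, -e.2))
          (fun _ _ => by simp) ?_ ?_ (fun _ _ => rfl)
        · intro e _
          simp [hneg]
        · rintro ⟨x, y, z, w⟩ hd
          simp only [coe_filter, mem_univ, true_and, Set.mem_ofPred_eq, hneg] at hd
          simp [hd]
    _ = (Fintype.card F - 1) ^ 2 := by simp [sq, Fintype.card_units]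

lemma card_filter_units_add_ne_zero (A : F) :
    #{d : Fˣ × Fˣ × Fˣ × Fˣ | (d.1 : F) + d.2.1 ≠ 0 ∧
        (d.2.2.1 : F) + d.2.2.2 = A * (d.1 + d.2.1) ∧ (d.1 : F) * d.2.1 = d.2.2.1 * d.2.2.2} =
      ∑ s ∈ {s : F | s ≠ 0},
        #{z : F × F | z.1 * (s - z.1) = z.2 * (A * s - z.2) ∧ z.1 * (s - z.1) ≠ 0} := by
  rw [← card_sigma]
  refine card_nbij (fun d => ⟨d.1 + d.2.1, d.1, d.2.2.1⟩) ?_ ?_ ?_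
  · rintro ⟨x, y, z, w⟩ hd
    simp only [coe_filter, mem_univ, true_and, Set.mem_ofPred_eq] at hd
    obtain ⟨hs, hsum, hprod⟩ := hd
    simp only [coe_sigma, Set.mem_sigma_iff, coe_filter, mem_univ, true_and, Set.mem_ofPred_eq,
      add_sub_cancel_left]
    exact ⟨hs, by linear_combination hprod + (z : F) * hsum, by simp⟩
  · rintro ⟨x, y, z, w⟩ hd ⟨x', y', z', w'⟩ hd' heq
    simp only [coe_filter, mem_univ, true_and, Set.mem_ofPred_eq] at hd hd'
    simp only [Sigma.mk.injEq, Prod.mk.injEq, heq_eq_eq] at heq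
    obtain ⟨hs, hx, hz⟩ := heq
    simp only [Prod.mk.injEq, Units.ext_iff]
    exact ⟨hx, by linear_combination hs - hx, hz,
      by linear_combination hd.2.1 - hd'.2.1 - hz + A * hs⟩
  · rintro ⟨s, x, z⟩ hb
    simp only [coe_sigma, Set.mem_sigma_iff, coe_filter, mem_univ, true_and,
      Set.mem_ofPred_eq] at hb
    obtain ⟨hs, hconic, hne⟩ := hb
    have hne' := hconic ▸ hne
    lift x to Fˣ using (left_ne_zero_of_mul hne).isUnit
    lift z to Fˣ using (left_ne_zero_of_mul hne').isUnit
    refine ⟨(x, .mk0 _ (right_ne_zero_of_mul hne), z, .mk0 _ (right_ne_zero_of_mul hne')), ?_, ?_⟩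
    · simp only [coe_filter, mem_univ, true_and, Set.mem_ofPred_eq, Units.val_mk0, add_sub_cancel]
      exact ⟨hs, hconic⟩
    · simp

lemma card_quadruples (h2 : (2 : F) ≠ 0) {A : F} (hA : A ≠ 0) :
    (#{d : Fˣ × Fˣ × Fˣ × Fˣ | A * ((d.1 : F) + d.2.1) = d.2.2.1 + d.2.2.2 ∧
        A * ((d.1 : F)⁻¹ + (d.2.1 : F)⁻¹) = (d.2.2.1 : F)⁻¹ + (d.2.2.2 : F)⁻¹} : ℤ) =
      if A ^ 2 = 1 then 3 * ((Fintype.card F : ℤ) - 1) * (Fintype.card F - 2)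
      else 2 * ((Fintype.card F : ℤ) - 1) * (Fintype.card F - 3) := by
  set q := Fintype.card F
  have hq : 1 ≤ q := Fintype.card_pos
  have hcard_ne_zero : #{s : F | s ≠ 0} = q - 1 := by
    rw [filter_ne', card_erase_of_mem (mem_univ 0), card_univ]
  have hsplit : #{d : Fˣ × Fˣ × Fˣ × Fˣ | A * ((d.1 : F) + d.2.1) = d.2.2.1 + d.2.2.2 ∧
        A * ((d.1 : F)⁻¹ + (d.2.1 : F)⁻¹) = (d.2.2.1 : F)⁻¹ + (d.2.2.2 : F)⁻¹} =
      (q - 1) ^ 2 + ∑ s ∈ {s : F | s ≠ 0},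
        #{z : F × F | z.1 * (s - z.1) = z.2 * (A * s - z.2) ∧ z.1 * (s - z.1) ≠ 0} := by
    rw [filter_congr fun d _ => add_inv_conditions_iff hA d.1.ne_zero d.2.1.ne_zero
      d.2.2.1.ne_zero d.2.2.2.ne_zero, filter_or, card_union_of_disjoint,
      card_filter_units_add_eq_zero, card_filter_units_add_ne_zero]
    exact disjoint_filter.mpr fun _ _ h h' => h'.1 h.1
  have hsum : ∑ s ∈ {s : F | s ≠ 0},
        (#{z : F × F | z.1 * (s - z.1) = z.2 * (A * s - z.2) ∧ z.1 * (s - z.1) ≠ 0} + 4) =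
      (q - 1) * if A ^ 2 = 1 then 2 * q - 1 else q - 1 := by
    rw [sum_congr rfl fun s hs => card_filter_conic_add_four h2 (mem_filter.mp hs).2 hA, sum_const,
      hcard_ne_zero, smul_eq_mul]
  rw [sum_add_distrib, sum_const, hcard_ne_zero, smul_eq_mul] at hsum
  split_ifs at hsum ⊢ <;> zify [hq, (by omega : 1 ≤ 2 * q)] at hsplit hsum <;> linarith

end

/-- the count `ν(a)` of quadruples `(d₁, d₂, d₃, d₄)` of reduced residues mod an
odd prime `p` with `a(d₁ + d₂) ≡ d₃ + d₄` and `a(d₁⁻¹ + d₂⁻¹) ≡ d₃⁻¹ + d₄⁻¹ (mod p)` equals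
`2(p−1)(p−3) + p(p−1)` if `a² ≡ 1 (mod p)` and `2(p−1)(p−3)` otherwise. -/
theorem nu_count (p : ℕ) [Fact p.Prime] (hodd : Odd p) (a : ℤ) (ha : ¬ (p : ℤ) ∣ a) :
    (((Finset.univ.filter (fun d : (ZMod p)ˣ × (ZMod p)ˣ × (ZMod p)ˣ × (ZMod p)ˣ =>
          (a : ZMod p) * ((d.1 : ZMod p) + (d.2.1 : ZMod p)) =
              (d.2.2.1 : ZMod p) + (d.2.2.2 : ZMod p) ∧
            (a : ZMod p) * ((d.1 : ZMod p)⁻¹ + (d.2.1 : ZMod p)⁻¹) =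
              (d.2.2.1 : ZMod p)⁻¹ + (d.2.2.2 : ZMod p)⁻¹)).card : ℤ) =
        if (p : ℤ) ∣ (a ^ 2 - 1) then 2 * ((p : ℤ) - 1) * ((p : ℤ) - 3) + (p : ℤ) * ((p : ℤ) - 1)
        else 2 * ((p : ℤ) - 1) * ((p : ℤ) - 3)) := by
  have h2 : (2 : ZMod p) ≠ 0 :=
    Ring.two_ne_zero (by rw [ZMod.ringChar_zmod_n]; exact hodd.ne_two_of_dvd_nat dvd_rfl)
  have hA : (a : ZMod p) ≠ 0 := by rwa [Ne, ZMod.intCast_zmod_eq_zero_iff_dvd]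
  have hsq : (p : ℤ) ∣ a ^ 2 - 1 ↔ (a : ZMod p) ^ 2 = 1 := by
    rw [← ZMod.intCast_zmod_eq_zero_iff_dvd, Int.cast_sub, Int.cast_pow, Int.cast_one, sub_eq_zero]
  rw [card_quadruples h2 hA, ZMod.card, if_congr hsq.symm rfl rfl]
  split_ifs <;> ring
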